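/- With notation as for a sparse operator on a dyadic grid: T^S satisfies the weak (1,1) inequality μ({x : T^S f(x) > λ}) ≤ (C/λ) ∫_X |f| dμ for all λ > 0 and f ∈ L¹(μ), with C an absolute constant. -/

import Mathlib

open MeasureTheory Real Set Filter

/-- The normalized Luxemburg (Orlicz) norm of `v` over the set `E`:
`inf { λ > 0 : μ(E)⁻¹ ∫_E A(|v|/λ) dμ ≤ 1 }`. -/
noncomputable def luxNorm {X : Type*} [MeasurableSpace X] (μ : Measure X)
    (A : ℝ → ℝ) (E : Set X) (v : X → ℝ) : ℝ :=
  sInf {l : ℝ | 0 < l ∧ ∫⁻ x in E, ENNReal.ofReal (A (|v x| / l)) ∂μ ≤ μ E}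

/-- A Young function: continuous, convex, increasing on `[0,∞)`, vanishing at `0`,
with superlinear growth at infinity. -/
def IsYoung (A : ℝ → ℝ) : Prop :=
  ContinuousOn A (Set.Ici 0) ∧ ConvexOn ℝ (Set.Ici 0) A ∧ MonotoneOn A (Set.Ici 0) ∧
    A 0 = 0 ∧ Filter.Tendsto (fun t => A t / t) Filter.atTop Filter.atTop


/-!
If `T^S f(x) > λ`, finitely many cubes of `S` containing `x` have averages adding up to more than
`λ`, and the smallest of them is *heavy at level `λ`*. So it suffices to bound the total measure
of a disjoint family `I` of heavy cubes by `32 ‖f‖₁ / λ`.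

Sparseness makes the measures along a chain of ancestors grow geometrically, so a heavy cube has
measure at most `3 ‖f‖₁ / λ`. Cubes of `I` with an ancestor of average `> λ/16` have total measure
at most `16 ‖f‖₁ / λ` (maximal function estimate). Every other cube of `I` has at least eight
ancestors heavy at level `λ/2`; by sparseness the maximal ones among all these ancestors form a
disjoint family, heavy at level `λ/2` and no larger than `I`, whose measure is at least four
times that of the remaining cubes of `I`. Iterating `k` times gives the bound
`32 ‖f‖₁ / λ + 2⁻ᵏ |I| 3 ‖f‖₁ / λ`, and `k → ∞` concludes.
-/

open scoped ENNReal

namespace SparseOperator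

section Nested

variable {X : Type*}

def IsNested (S : Set (Set X)) : Prop :=
  ∀ Q ∈ S, ∀ Q' ∈ S, Q ∩ Q' = ∅ ∨ Q ⊆ Q' ∨ Q' ⊆ Q

variable {S : Set (Set X)}

theorem IsNested.subset_or_subset (hS : IsNested S) {Q Q' : Set X} (hQ : Q ∈ S) (hQ' : Q' ∈ S)
    {x : X} (hxQ : x ∈ Q) (hxQ' : x ∈ Q') : Q ⊆ Q' ∨ Q' ⊆ Q :=
  (hS Q hQ Q' hQ').resolve_left (nonempty_iff_ne_empty.1 ⟨x, hxQ, hxQ'⟩)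

theorem IsNested.exists_least (hS : IsNested S) {G : Finset (Set X)} (hG : ↑G ⊆ S)
    (hne : G.Nonempty) {x : X} (hx : ∀ R ∈ G, x ∈ R) : ∃ R₀ ∈ G, ∀ R ∈ G, R₀ ⊆ R := by
  obtain ⟨R₀, hR₀, hmin⟩ := Finset.exists_minimal hne
  refine ⟨R₀, hR₀, fun R hR => ?_⟩
  rcases hS.subset_or_subset (hG hR₀) (hG hR) (hx R₀ hR₀) (hx R hR) with h | h
  exacts [h, hmin hR h]

theorem IsNested.exists_greatest (hS : IsNested S) {G : Finset (Set X)} (hG : ↑G ⊆ S)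
    (hne : G.Nonempty) {x : X} (hx : ∀ R ∈ G, x ∈ R) : ∃ M ∈ G, ∀ R ∈ G, R ⊆ M := by
  obtain ⟨M, hM, hmax⟩ := Finset.exists_maximal hne
  refine ⟨M, hM, fun R hR => ?_⟩
  rcases hS.subset_or_subset (hG hM) (hG hR) (hx M hM) (hx R hR) with h | h
  exacts [hmax hR h, h]

open scoped Classical in
theorem biUnion_filter_maximal (T : Finset (Set X)) :
    ⋃ M ∈ T.filter (Maximal (· ∈ T)), M = ⋃ R ∈ T, R := by
  refine subset_antisymm (biUnion_subset_biUnion_left fun M hM => (Finset.mem_filter.1 hM).1) ?_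
  refine iUnion₂_subset fun R hR => ?_
  obtain ⟨M, hRM, hM⟩ := T.exists_le_maximal hR
  exact hRM.trans (subset_biUnion_of_mem (u := id) (Finset.mem_filter.2 ⟨hM.1, hM⟩))

open scoped Classical in
theorem IsNested.pairwiseDisjoint_filter_maximal (hS : IsNested S) {T : Finset (Set X)}
    (hT : ↑T ⊆ S) : (↑(T.filter (Maximal (· ∈ T))) : Set (Set X)).PairwiseDisjoint id := by
  intro M hM M' hM' hne
  rw [Finset.mem_coe, Finset.mem_filter] at hM hM'
  rcases hS M (hT hM.1) M' (hT hM'.1) with h | h | h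
  · exact disjoint_iff_inter_eq_empty.2 h
  · exact absurd (hM.2.eq_of_ge hM'.1 h).symm hne
  · exact absurd (hM'.2.eq_of_ge hM.1 h) hne

open scoped Classical in
/-- All these cubes contain the least of them, whose ancestors carry weight at most `t`. -/
theorem IsNested.sum_filter_sum_ancestors_le (hS : IsNested S) {G : Finset (Set X)}
    (hG : ↑G ⊆ S) {x : X} (hx : ∀ R ∈ G, x ∈ R) {w : Set X → ℝ} (hw : ∀ R ∈ G, 0 ≤ w R)
    {t : ℝ} (ht : 0 ≤ t) :
    ∑ R ∈ G.filter (fun R => ∑ R' ∈ G.filter (R ⊆ ·), w R' ≤ t), w R ≤ t := by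
  set L := G.filter (fun R => ∑ R' ∈ G.filter (R ⊆ ·), w R' ≤ t)
  have hLG : L ⊆ G := Finset.filter_subset _ _
  rcases L.eq_empty_or_nonempty with h | hne
  · rwa [h, Finset.sum_empty]
  obtain ⟨R₀, hR₀, hleast⟩ :=
    hS.exists_least ((Finset.coe_subset.2 hLG).trans hG) hne fun R hR => hx R (hLG hR)
  calc ∑ R ∈ L, w R ≤ ∑ R' ∈ G.filter (R₀ ⊆ ·), w R' :=
        Finset.sum_le_sum_of_subset_of_nonneg
          (fun R hR => Finset.mem_filter.2 ⟨hLG hR, hleast R hR⟩)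
          fun R hR _ => hw R (Finset.filter_subset _ _ hR)
    _ ≤ t := (Finset.mem_filter.1 hR₀).2

theorem card_le_card_of_forall_exists_subset {I J : Finset (Set X)}
    (hJ : (↑J : Set (Set X)).PairwiseDisjoint id) (hI : ∀ Q ∈ I, Q.Nonempty)
    (hJI : ∀ R ∈ J, ∃ Q ∈ I, Q ⊆ R) : J.card ≤ I.card := by
  choose! g hgI hgR using hJI
  refine Finset.card_le_card_of_injOn g hgI fun R hR R' hR' hRR' => hJ.elim hR hR' ?_
  obtain ⟨x, hx⟩ := hI (g R) (hgI R hR)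
  exact not_disjoint_iff.2 ⟨x, hgR R hR hx, hgR R' hR' (hRR' ▸ hx)⟩

end Nested

variable {X : Type*} [MeasurableSpace X] {μ : Measure X} {f : X → ℝ}

theorem setAverage_nonneg_of_nonneg (hf : 0 ≤ f) (R : Set X) : 0 ≤ ⨍ x in R, f x ∂μ := by
  rw [setAverage_eq]
  exact smul_nonneg (inv_nonneg.2 measureReal_nonneg) (integral_nonneg hf)

theorem setAverage_le_inv_mul_integral (hf : 0 ≤ f) (hfi : Integrable f μ) (R : Set X) :
    ⨍ x in R, f x ∂μ ≤ (μ.real R)⁻¹ * ∫ x, f x ∂μ := by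
  rw [setAverage_eq, smul_eq_mul]
  exact mul_le_mul_of_nonneg_left (setIntegral_le_integral hfi (Eventually.of_forall hf))
    (inv_nonneg.2 measureReal_nonneg)

theorem measureReal_le_setIntegral_div_of_lt_setAverage {R : Set X} {c : ℝ} (hc : 0 < c)
    (h : c < ⨍ x in R, f x ∂μ) : μ.real R ≤ (∫ x in R, f x ∂μ) / c := by
  rw [setAverage_eq, smul_eq_mul] at h
  rcases measureReal_nonneg.eq_or_lt with h0 | hpos
  · rw [← h0, inv_zero, zero_mul] at h
    linarith
  · rw [lt_inv_mul_iff₀ hpos] at h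
    rw [le_div_iff₀ hc]
    linarith

structure IsNestedFamily (μ : Measure X) (S : Set (Set X)) : Prop where
  isNested : IsNested S
  measurableSet : ∀ Q ∈ S, MeasurableSet Q
  measure_pos : ∀ Q ∈ S, 0 < μ Q
  measure_lt_top : ∀ Q ∈ S, μ Q < ∞

structure IsSparseFamily (μ : Measure X) (S : Set (Set X)) (E : Set X → Set X) : Prop
    extends IsNestedFamily μ S where
  subset : ∀ Q ∈ S, E Q ⊆ Q
  measurableSet_sparse : ∀ Q ∈ S, MeasurableSet (E Q)
  disjoint_sparse : ∀ Q ∈ S, ∀ Q' ∈ S, Q ≠ Q' → E Q ∩ E Q' = ∅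
  measure_le_two_mul : ∀ Q ∈ S, μ Q ≤ 2 * μ (E Q)

noncomputable def sparseOperator (μ : Measure X) (S : Set (Set X)) (f : X → ℝ) (x : X) : ℝ :=
  ∑' Q : S, (⨍ y in (Q : Set X), f y ∂μ) * (Q : Set X).indicator (fun _ => (1 : ℝ)) x

def IsHeavy (μ : Measure X) (S : Set (Set X)) (f : X → ℝ) (lam : ℝ) (Q : Set X) : Prop :=
  Q ∈ S ∧ ∃ G : Finset (Set X), ↑G ⊆ S ∧ (∀ R ∈ G, Q ⊆ R) ∧ lam < ∑ R ∈ G, ⨍ x in R, f x ∂μ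

variable {S : Set (Set X)} {lam : ℝ}

theorem IsNested.setOf_lt_sparseOperator_subset (hS : IsNested S) (hlam : 0 < lam) :
    {x | lam < sparseOperator μ S f x} ⊆ ⋃₀ {Q | IsHeavy μ S f lam Q} := by
  classical
  intro x hx
  obtain ⟨s, hs⟩ : ∃ s : Finset S, lam < ∑ Q ∈ s,
      (⨍ y in (Q : Set X), f y ∂μ) * (Q : Set X).indicator (fun _ => (1 : ℝ)) x := by
    by_contra! h
    exact (tsum_le_of_sum_le' hlam.le h).not_gt hx
  set G := (s.filter (fun Q : S => x ∈ (Q : Set X))).map (Function.Embedding.subtype _)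
  have hGS : ↑G ⊆ S := fun R hR => by
    obtain ⟨Q, -, rfl⟩ := Finset.mem_map.1 hR
    exact Q.2
  have hxG : ∀ R ∈ G, x ∈ R := fun R hR => by
    obtain ⟨Q, hQ, rfl⟩ := Finset.mem_map.1 hR
    exact (Finset.mem_filter.1 hQ).2
  have hsum : lam < ∑ R ∈ G, ⨍ y in R, f y ∂μ := by
    rw [Finset.sum_map, Finset.sum_filter]
    convert hs using 2 with Q
    by_cases hxQ : x ∈ (Q : Set X) <;> simp [hxQ]
  have hne : G.Nonempty := Finset.nonempty_of_sum_ne_zero (hlam.trans hsum).ne'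
  obtain ⟨Q₀, hQ₀, hleast⟩ := hS.exists_least hGS hne hxG
  exact ⟨Q₀, ⟨hGS hQ₀, G, hGS, hleast, hsum⟩, hxG Q₀ hQ₀⟩

namespace IsNestedFamily

variable (hS : IsNestedFamily μ S)
include hS

theorem nonempty {Q : Set X} (hQ : Q ∈ S) : Q.Nonempty :=
  nonempty_of_measure_ne_zero (hS.measure_pos Q hQ).ne'

theorem measureReal_pos {Q : Set X} (hQ : Q ∈ S) : 0 < μ.real Q :=
  ENNReal.toReal_pos (hS.measure_pos Q hQ).ne' (hS.measure_lt_top Q hQ).ne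

theorem measure_biUnion_ne_top {I : Finset (Set X)} (hI : ↑I ⊆ S) : μ (⋃ Q ∈ I, Q) ≠ ∞ :=
  (measure_biUnion_lt_top I.finite_toSet fun Q hQ => hS.measure_lt_top Q (hI hQ)).ne

theorem sum_measureReal_eq {I : Finset (Set X)} (hI : ↑I ⊆ S)
    (hd : (↑I : Set (Set X)).PairwiseDisjoint id) : ∑ Q ∈ I, μ.real Q = μ.real (⋃ Q ∈ I, Q) :=
  (measureReal_biUnion_finset hd (fun Q hQ => hS.measurableSet Q (hI hQ))
    fun Q hQ => (hS.measure_lt_top Q (hI hQ)).ne).symm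

theorem sum_measureReal_le_integral_div (hf : 0 ≤ f) (hfi : Integrable f μ) {c : ℝ} (hc : 0 < c)
    {I : Finset (Set X)} (hI : ↑I ⊆ S) (hd : (↑I : Set (Set X)).PairwiseDisjoint id)
    (hR : ∀ Q ∈ I, ∃ R ∈ S, Q ⊆ R ∧ c < ⨍ x in R, f x ∂μ) :
    ∑ Q ∈ I, μ.real Q ≤ (∫ x, f x ∂μ) / c := by
  classical
  choose! R hRS hQR hcR using hR
  set T := I.image R
  set J := T.filter (Maximal (· ∈ T))
  have hTS : ↑T ⊆ S := fun M hM => by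
    obtain ⟨Q, hQ, rfl⟩ := Finset.mem_image.1 hM
    exact hRS Q hQ
  have hJT : J ⊆ T := Finset.filter_subset _ _
  have hJS : ↑J ⊆ S := (Finset.coe_subset.2 hJT).trans hTS
  have hJd := hS.isNested.pairwiseDisjoint_filter_maximal hTS
  have hcov : ⋃ Q ∈ I, Q ⊆ ⋃ M ∈ J, M := by
    rw [biUnion_filter_maximal]
    exact iUnion₂_subset fun Q hQ =>
      (hQR Q hQ).trans (subset_biUnion_of_mem (u := id) (Finset.mem_image_of_mem R hQ))
  have hcJ : ∀ M ∈ J, c < ⨍ x in M, f x ∂μ := fun M hM => by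
    obtain ⟨Q, hQ, rfl⟩ := Finset.mem_image.1 (hJT hM)
    exact hcR Q hQ
  calc ∑ Q ∈ I, μ.real Q = μ.real (⋃ Q ∈ I, Q) := hS.sum_measureReal_eq hI hd
    _ ≤ μ.real (⋃ M ∈ J, M) := measureReal_mono hcov (hS.measure_biUnion_ne_top hJS)
    _ = ∑ M ∈ J, μ.real M := (hS.sum_measureReal_eq hJS hJd).symm
    _ ≤ ∑ M ∈ J, (∫ x in M, f x ∂μ) / c := Finset.sum_le_sum fun M hM =>
      measureReal_le_setIntegral_div_of_lt_setAverage hc (hcJ M hM)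
    _ = (∫ x in ⋃ M ∈ J, M, f x ∂μ) / c := by
      rw [integral_biUnion_finset J (fun M hM => hS.measurableSet M (hJS hM)) hJd
        fun M _ => hfi.integrableOn, Finset.sum_div]
    _ ≤ (∫ x, f x ∂μ) / c :=
      div_le_div_of_nonneg_right (setIntegral_le_integral hfi (Eventually.of_forall hf)) hc.le

theorem mul_sum_measureReal_le_sum_biUnion {I : Finset (Set X)} (hI : ↑I ⊆ S)
    (hd : (↑I : Set (Set X)).PairwiseDisjoint id) {A : Set X → Finset (Set X)}
    (hAS : ∀ Q ∈ I, ↑(A Q) ⊆ S) {n : ℕ} (hn : ∀ Q ∈ I, n ≤ (A Q).card)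
    (hQA : ∀ Q ∈ I, ∀ R ∈ A Q, Q ⊆ R) :
    n * ∑ Q ∈ I, μ.real Q ≤ ∑ R ∈ I.biUnion A, μ.real R := by
  calc n * ∑ Q ∈ I, μ.real Q ≤ ∑ Q ∈ I, ∑ _R ∈ A Q, μ.real Q := by
        rw [Finset.mul_sum]
        gcongr with Q hQ
        rw [Finset.sum_const, nsmul_eq_mul]
        gcongr
        exact_mod_cast hn Q hQ
    _ = ∑ R ∈ I.biUnion A, ∑ Q ∈ I.filter (R ∈ A ·), μ.real Q :=
        Finset.sum_comm' fun Q R => by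
          simp only [Finset.mem_filter, Finset.mem_biUnion]
          exact ⟨fun h => ⟨h, Q, h⟩, fun h => h.1⟩
    _ ≤ ∑ R ∈ I.biUnion A, μ.real R := by
        refine Finset.sum_le_sum fun R hR => ?_
        obtain ⟨Q₀, hQ₀, hRQ₀⟩ := Finset.mem_biUnion.1 hR
        have hfI : I.filter (R ∈ A ·) ⊆ I := Finset.filter_subset _ _
        rw [hS.sum_measureReal_eq ((Finset.coe_subset.2 hfI).trans hI)
          (hd.subset (Finset.coe_subset.2 hfI))]
        refine measureReal_mono (iUnion₂_subset fun Q hQ => ?_)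
          (hS.measure_lt_top R (hAS Q₀ hQ₀ hRQ₀)).ne
        obtain ⟨hQI, hRQ⟩ := Finset.mem_filter.1 hQ
        exact hQA Q hQI R hRQ

end IsNestedFamily

theorem IsHeavy.exists_heavy_ancestors {Q : Set X} (hQ : IsHeavy μ S f lam Q)
    (hS : IsNestedFamily μ S) (hf : 0 ≤ f)
    (hsmall : ∀ R ∈ S, Q ⊆ R → ⨍ x in R, f x ∂μ ≤ lam / 16) :
    ∃ A : Finset (Set X), ↑A ⊆ S ∧ 8 ≤ A.card ∧ ∀ R ∈ A, Q ⊆ R ∧ IsHeavy μ S f (lam / 2) R := by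
  classical
  obtain ⟨hQS, G, hGS, hQG, hlt⟩ := hQ
  obtain ⟨x, hx⟩ := hS.nonempty hQS
  have hlam : 0 ≤ lam := by
    linarith [setAverage_nonneg_of_nonneg (μ := μ) hf Q, hsmall Q hQS subset_rfl]
  set tail : Set X → ℝ := fun R => ∑ R' ∈ G.filter (R ⊆ ·), ⨍ y in R', f y ∂μ
  set A := G.filter (fun R => lam / 2 < tail R)
  have hAG : A ⊆ G := Finset.filter_subset _ _
  refine ⟨A, (Finset.coe_subset.2 hAG).trans hGS, ?_, fun R hR => ?_⟩
  · have hsumA : ∑ R ∈ A, ⨍ y in R, f y ∂μ ≤ A.card * (lam / 16) := by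
      rw [← nsmul_eq_mul]
      exact Finset.sum_le_card_nsmul _ _ _ fun R hR => hsmall R (hGS (hAG hR)) (hQG R (hAG hR))
    have hsumRest := hS.isNested.sum_filter_sum_ancestors_le hGS (fun R hR => hQG R hR hx)
      (w := fun R => ⨍ y in R, f y ∂μ) (fun R _ => setAverage_nonneg_of_nonneg hf R)
      (t := lam / 2) (by positivity)
    have hsplit := Finset.sum_filter_add_sum_filter_not G (fun R => lam / 2 < tail R)
      fun R => ⨍ y in R, f y ∂μ
    simp only [not_lt] at hsplit
    by_contra! hcard
    have : (A.card : ℝ) * (lam / 16) ≤ 7 * (lam / 16) := by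
      gcongr
      exact_mod_cast Nat.lt_succ_iff.1 hcard
    linarith
  · obtain ⟨hRG, hRtail⟩ := Finset.mem_filter.1 hR
    refine ⟨hQG R hRG, hGS hRG, G.filter (R ⊆ ·), ?_, fun R' hR' => (Finset.mem_filter.1 hR').2,
      hRtail⟩
    exact (Finset.coe_subset.2 (Finset.filter_subset _ _)).trans hGS

theorem inv_add_two_div_add_le {u v : ℝ} (hu : 0 < u) (huv : u ≤ v) :
    v⁻¹ + 2 / (u + v) ≤ 2 / u := by
  have hv : 0 < v := hu.trans_le huv
  rw [inv_eq_one_div, div_add_div _ _ hv.ne' (by positivity), div_le_div_iff₀ (by positivity) hu]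
  nlinarith [mul_le_mul_of_nonneg_left huv hu.le]

namespace IsSparseFamily

variable {E : Set X → Set X} (hS : IsSparseFamily μ S E)
include hS

theorem sum_measure_le_two_mul {A : Finset (Set X)} (hA : ↑A ⊆ S) {M : Set X}
    (hAM : ∀ R ∈ A, R ⊆ M) : ∑ R ∈ A, μ R ≤ 2 * μ M :=
  calc ∑ R ∈ A, μ R ≤ ∑ R ∈ A, 2 * μ (E R) :=
        Finset.sum_le_sum fun R hR => hS.measure_le_two_mul R (hA hR)
    _ = 2 * μ (⋃ R ∈ A, E R) := by
        rw [← Finset.mul_sum, measure_biUnion_finset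
          (fun R hR R' hR' hne => disjoint_iff_inter_eq_empty.2
            (hS.disjoint_sparse R (hA hR) R' (hA hR') hne))
          fun R hR => hS.measurableSet_sparse R (hA hR)]
    _ ≤ 2 * μ M := by
        gcongr
        exact iUnion₂_subset fun R hR => (hS.subset R (hA hR)).trans (hAM R hR)

theorem sum_measureReal_le_two_mul {A : Finset (Set X)} (hA : ↑A ⊆ S) {M : Set X}
    (hM : μ M ≠ ∞) (hAM : ∀ R ∈ A, R ⊆ M) : ∑ R ∈ A, μ.real R ≤ 2 * μ.real M := by
  have h := ENNReal.toReal_mono (ENNReal.mul_ne_top ENNReal.ofNat_ne_top hM)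
    (hS.sum_measure_le_two_mul hA hAM)
  rwa [ENNReal.toReal_sum fun R hR => (hS.measure_lt_top R (hA hR)).ne, ENNReal.toReal_mul,
    ENNReal.toReal_ofNat] at h

/-- The extra term `2 / (μ Q + ∑ μ R)` lets the induction, which removes the largest cube `M`,
close: by sparseness `μ Q + ∑_{R ≠ M} μ R ≤ μ M`. -/
theorem sum_inv_measureReal_add_le {Q : Set X} (hQ : Q ∈ S) (G : Finset (Set X))
    (hG : ↑G ⊆ S) (hQG : ∀ R ∈ G, Q ⊂ R) :
    ∑ R ∈ G, (μ.real R)⁻¹ + 2 / (μ.real Q + ∑ R ∈ G, μ.real R) ≤ 2 / μ.real Q := by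
  induction G using Finset.strongInduction with
  | H G ih =>
  rcases G.eq_empty_or_nonempty with rfl | hne
  · simp
  obtain ⟨x, hx⟩ := hS.nonempty hQ
  obtain ⟨M, hM, hRM⟩ := hS.isNested.exists_greatest hG hne fun R hR => (hQG R hR).subset hx
  have hG' : ↑(G.erase M) ⊆ S := (Finset.coe_subset.2 (Finset.erase_subset _ _)).trans hG
  have ih' := ih (G.erase M) (Finset.erase_ssubset hM) hG'
    fun R hR => hQG R (Finset.mem_of_mem_erase hR)
  set u := μ.real Q + ∑ R ∈ G.erase M, μ.real R
  have hu : 0 < u := add_pos_of_pos_of_nonneg (hS.measureReal_pos hQ)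
    (Finset.sum_nonneg fun _ _ => measureReal_nonneg)
  have huM : u ≤ μ.real M := by
    have hQG' : Q ∉ G := fun h => (hQG Q h).ne rfl
    have h := hS.sum_measureReal_le_two_mul (A := insert Q G)
      (by simpa [Finset.coe_insert] using insert_subset hQ hG) (hS.measure_lt_top M (hG hM)).ne
      fun R hR => (Finset.mem_insert.1 hR).elim (fun h => h ▸ (hQG M hM).subset) (hRM R)
    rw [Finset.sum_insert hQG', ← Finset.add_sum_erase G _ hM] at h
    linarith
  rw [← Finset.add_sum_erase G _ hM, ← Finset.add_sum_erase G _ hM,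
    show μ.real Q + (μ.real M + ∑ R ∈ G.erase M, μ.real R) = u + μ.real M by ring]
  linarith [inv_add_two_div_add_le hu huM]

theorem sum_inv_measureReal_le {Q : Set X} (hQ : Q ∈ S) {G : Finset (Set X)} (hG : ↑G ⊆ S)
    (hQG : ∀ R ∈ G, Q ⊆ R) : ∑ R ∈ G, (μ.real R)⁻¹ ≤ 3 / μ.real Q := by
  have h := hS.sum_inv_measureReal_add_le hQ (G.erase Q)
    ((Finset.coe_subset.2 (Finset.erase_subset _ _)).trans hG)
    fun R hR => (hQG R (Finset.mem_of_mem_erase hR)).ssubset_of_ne (Finset.ne_of_mem_erase hR).symm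
  have hpos := hS.measureReal_pos hQ
  have h2 : 0 ≤ 2 / (μ.real Q + ∑ R ∈ G.erase Q, μ.real R) :=
    div_nonneg zero_le_two (by positivity)
  have hsub : ∑ R ∈ G, (μ.real R)⁻¹ ≤ (μ.real Q)⁻¹ + ∑ R ∈ G.erase Q, (μ.real R)⁻¹ := by
    by_cases hQG : Q ∈ G
    · exact (Finset.add_sum_erase G (fun R => (μ.real R)⁻¹) hQG).ge
    · rw [Finset.erase_eq_of_notMem hQG]
      exact le_add_of_nonneg_left (inv_nonneg.2 hpos.le)
  rw [show (3 : ℝ) / μ.real Q = (μ.real Q)⁻¹ + 2 / μ.real Q by field_simp; norm_num]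
  linarith

theorem measureReal_le_of_isHeavy (hf : 0 ≤ f) (hfi : Integrable f μ) (hlam : 0 < lam)
    {Q : Set X} (hQ : IsHeavy μ S f lam Q) :
    μ.real Q ≤ 3 * ((∫ x, f x ∂μ) / lam) := by
  obtain ⟨hQS, G, hGS, hQG, hlt⟩ := hQ
  have hpos := hS.measureReal_pos hQS
  have hF : 0 ≤ ∫ x, f x ∂μ := integral_nonneg hf
  have h : lam < 3 / μ.real Q * ∫ x, f x ∂μ :=
    calc lam < ∑ R ∈ G, ⨍ x in R, f x ∂μ := hlt
      _ ≤ ∑ R ∈ G, (μ.real R)⁻¹ * ∫ x, f x ∂μ :=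
        Finset.sum_le_sum fun R _ => setAverage_le_inv_mul_integral hf hfi R
      _ = (∑ R ∈ G, (μ.real R)⁻¹) * ∫ x, f x ∂μ := (Finset.sum_mul _ _ _).symm
      _ ≤ 3 / μ.real Q * ∫ x, f x ∂μ := by
        gcongr
        exact hS.sum_inv_measureReal_le hQS hGS hQG
  rw [div_mul_eq_mul_div, lt_div_iff₀ hpos] at h
  rw [← mul_div_assoc, le_div_iff₀ hlam]
  linarith

theorem exists_pairwiseDisjoint_maximal_ancestors {I : Finset (Set X)} (hI : ↑I ⊆ S)
    (hd : (↑I : Set (Set X)).PairwiseDisjoint id) {A : Set X → Finset (Set X)}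
    (hAS : ∀ Q ∈ I, ↑(A Q) ⊆ S) (hA8 : ∀ Q ∈ I, 8 ≤ (A Q).card)
    (hQA : ∀ Q ∈ I, ∀ R ∈ A Q, Q ⊆ R) :
    ∃ J ⊆ I.biUnion A, (↑J : Set (Set X)).PairwiseDisjoint id ∧ J.card ≤ I.card ∧
      4 * ∑ Q ∈ I, μ.real Q ≤ ∑ R ∈ J, μ.real R := by
  classical
  set T := I.biUnion A
  have hTS : ↑T ⊆ S := fun R hR => by
    obtain ⟨Q, hQ, hRQ⟩ := Finset.mem_biUnion.1 hR
    exact hAS Q hQ hRQ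
  set J := T.filter (Maximal (· ∈ T))
  have hJS : ↑J ⊆ S := (Finset.coe_subset.2 (Finset.filter_subset _ _)).trans hTS
  have hJd := hS.isNested.pairwiseDisjoint_filter_maximal hTS
  refine ⟨J, Finset.filter_subset _ _, hJd, ?_, ?_⟩
  · refine card_le_card_of_forall_exists_subset hJd (fun Q hQ => hS.nonempty (hI hQ))
      fun R hR => ?_
    obtain ⟨Q, hQ, hRQ⟩ := Finset.mem_biUnion.1 (Finset.filter_subset _ _ hR)
    exact ⟨Q, hQ, hQA Q hQ R hRQ⟩
  · have h8 := hS.mul_sum_measureReal_le_sum_biUnion hI hd hAS hA8 hQA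
    have h2 : ∑ R ∈ T, μ.real R ≤ 2 * ∑ R ∈ J, μ.real R := by
      rw [hS.sum_measureReal_eq hJS hJd, biUnion_filter_maximal]
      exact hS.sum_measureReal_le_two_mul hTS (hS.measure_biUnion_ne_top hTS)
        fun R hR => subset_biUnion_of_mem (u := id) hR
    push_cast at h8
    linarith

theorem exists_isHeavy_half (hf : 0 ≤ f) (hfi : Integrable f μ) (hlam : 0 < lam)
    {I : Finset (Set X)} (hI : ↑I ⊆ S) (hd : (↑I : Set (Set X)).PairwiseDisjoint id)
    (hheavy : ∀ Q ∈ I, IsHeavy μ S f lam Q) :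
    ∃ J : Finset (Set X), (↑J : Set (Set X)).PairwiseDisjoint id ∧
      (∀ R ∈ J, IsHeavy μ S f (lam / 2) R) ∧ J.card ≤ I.card ∧
      ∑ Q ∈ I, μ.real Q ≤ 16 * ((∫ x, f x ∂μ) / lam) + 4⁻¹ * ∑ R ∈ J, μ.real R := by
  classical
  set P : Set X → Prop := fun Q => ∃ R ∈ S, Q ⊆ R ∧ lam / 16 < ⨍ x in R, f x ∂μ
  have hIP : I.filter P ⊆ I := Finset.filter_subset _ _
  have hInP : I.filter (¬P ·) ⊆ I := Finset.filter_subset _ _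
  have hP := hS.sum_measureReal_le_integral_div hf hfi (c := lam / 16) (by positivity)
    ((Finset.coe_subset.2 hIP).trans hI) (hd.subset (Finset.coe_subset.2 hIP))
    fun Q hQ => (Finset.mem_filter.1 hQ).2
  have hA : ∀ Q ∈ I.filter (¬P ·), ∃ A : Finset (Set X),
      ↑A ⊆ S ∧ 8 ≤ A.card ∧ ∀ R ∈ A, Q ⊆ R ∧ IsHeavy μ S f (lam / 2) R := fun Q hQ => by
    obtain ⟨hQI, hnP⟩ := Finset.mem_filter.1 hQ
    exact (hheavy Q hQI).exists_heavy_ancestors hS.toIsNestedFamily hf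
      fun R hR hQR => not_lt.1 fun h => hnP ⟨R, hR, hQR, h⟩
  choose! A hAS hA8 hAheavy using hA
  obtain ⟨J, hJA, hJd, hJcard, hJsum⟩ := hS.exists_pairwiseDisjoint_maximal_ancestors
    ((Finset.coe_subset.2 hInP).trans hI) (hd.subset (Finset.coe_subset.2 hInP))
    hAS hA8 fun Q hQ R hR => (hAheavy Q hQ R hR).1
  refine ⟨J, hJd, fun R hR => ?_, hJcard.trans (Finset.card_le_card hInP), ?_⟩
  · obtain ⟨Q, hQ, hRQ⟩ := Finset.mem_biUnion.1 (hJA hR)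
    exact (hAheavy Q hQ R hRQ).2
  · rw [show (∫ x, f x ∂μ) / (lam / 16) = 16 * ((∫ x, f x ∂μ) / lam) by ring] at hP
    rw [← Finset.sum_filter_add_sum_filter_not I P]
    linarith

theorem sum_measureReal_le_add_pow (hf : 0 ≤ f) (hfi : Integrable f μ) (k : ℕ) (hlam : 0 < lam)
    {I : Finset (Set X)} (hI : ↑I ⊆ S) (hd : (↑I : Set (Set X)).PairwiseDisjoint id)
    (hheavy : ∀ Q ∈ I, IsHeavy μ S f lam Q) :
    ∑ Q ∈ I, μ.real Q ≤
      32 * ((∫ x, f x ∂μ) / lam) + (2⁻¹ : ℝ) ^ k * (I.card * (3 * ((∫ x, f x ∂μ) / lam))) := by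
  have hc : ∀ {lam : ℝ}, 0 < lam → 0 ≤ (∫ x, f x ∂μ) / lam := fun hlam =>
    div_nonneg (integral_nonneg hf) hlam.le
  induction k generalizing lam I with
  | zero =>
    calc ∑ Q ∈ I, μ.real Q ≤ ∑ _Q ∈ I, 3 * ((∫ x, f x ∂μ) / lam) :=
          Finset.sum_le_sum fun Q hQ => hS.measureReal_le_of_isHeavy hf hfi hlam (hheavy Q hQ)
      _ = I.card * (3 * ((∫ x, f x ∂μ) / lam)) := by rw [Finset.sum_const, nsmul_eq_mul]
      _ ≤ _ := by linarith [pow_zero (2⁻¹ : ℝ), hc hlam]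
  | succ k ih =>
    obtain ⟨J, hJd, hJheavy, hJcard, hIJ⟩ := hS.exists_isHeavy_half hf hfi hlam hI hd hheavy
    have hJ := ih (half_pos hlam) (fun R hR => (hJheavy R hR).1) hJd hJheavy
    have hcard : (2⁻¹ : ℝ) ^ k * (J.card * (3 * ((∫ x, f x ∂μ) / lam))) ≤
        (2⁻¹ : ℝ) ^ k * (I.card * (3 * ((∫ x, f x ∂μ) / lam))) := by
      have hJI : (J.card : ℝ) ≤ I.card := by exact_mod_cast hJcard
      have := hc hlam
      gcongr
    rw [show (∫ x, f x ∂μ) / (lam / 2) = 2 * ((∫ x, f x ∂μ) / lam) by ring] at hJ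
    rw [pow_succ]
    linarith

theorem sum_measureReal_le_of_isHeavy (hf : 0 ≤ f) (hfi : Integrable f μ) (hlam : 0 < lam)
    {I : Finset (Set X)} (hI : ↑I ⊆ S) (hd : (↑I : Set (Set X)).PairwiseDisjoint id)
    (hheavy : ∀ Q ∈ I, IsHeavy μ S f lam Q) :
    ∑ Q ∈ I, μ.real Q ≤ 32 * ((∫ x, f x ∂μ) / lam) := by
  have hlim : Tendsto (fun k : ℕ => 32 * ((∫ x, f x ∂μ) / lam) +
      (2⁻¹ : ℝ) ^ k * (I.card * (3 * ((∫ x, f x ∂μ) / lam)))) atTop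
      (nhds (32 * ((∫ x, f x ∂μ) / lam))) := by
    have hpow := tendsto_pow_atTop_nhds_zero_of_lt_one (r := (2⁻¹ : ℝ)) (by norm_num) (by norm_num)
    simpa using tendsto_const_nhds.add (hpow.mul_const _)
  exact ge_of_tendsto' hlim fun k => hS.sum_measureReal_le_add_pow hf hfi k hlam hI hd hheavy

theorem measure_biUnion_le_of_isHeavy (hf : 0 ≤ f) (hfi : Integrable f μ) (hlam : 0 < lam)
    {ι : Type*} (s : Finset ι) (u : ι → Set X) (hheavy : ∀ i ∈ s, IsHeavy μ S f lam (u i)) :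
    μ (⋃ i ∈ s, u i) ≤ ENNReal.ofReal (32 * ((∫ x, f x ∂μ) / lam)) := by
  classical
  set T := s.image u
  have hTS : ↑T ⊆ S := fun R hR => by
    obtain ⟨i, hi, rfl⟩ := Finset.mem_image.1 hR
    exact (hheavy i hi).1
  set J := T.filter (Maximal (· ∈ T))
  have hJT : J ⊆ T := Finset.filter_subset _ _
  have hJS : ↑J ⊆ S := (Finset.coe_subset.2 hJT).trans hTS
  have hJd := hS.isNested.pairwiseDisjoint_filter_maximal hTS
  have hJheavy : ∀ M ∈ J, IsHeavy μ S f lam M := fun M hM => by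
    obtain ⟨i, hi, rfl⟩ := Finset.mem_image.1 (hJT hM)
    exact hheavy i hi
  calc μ (⋃ i ∈ s, u i) = μ (⋃ M ∈ J, M) := by
        rw [biUnion_filter_maximal, Finset.set_biUnion_finset_image]
    _ = ENNReal.ofReal (∑ M ∈ J, μ.real M) := by
        rw [hS.sum_measureReal_eq hJS hJd, ofReal_measureReal (hS.measure_biUnion_ne_top hJS)]
    _ ≤ ENNReal.ofReal (32 * ((∫ x, f x ∂μ) / lam)) :=
        ENNReal.ofReal_le_ofReal (hS.sum_measureReal_le_of_isHeavy hf hfi hlam hJS hJd hJheavy)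

theorem measure_sUnion_le_of_isHeavy (hSc : S.Countable) (hf : 0 ≤ f) (hfi : Integrable f μ)
    (hlam : 0 < lam) :
    μ (⋃₀ {Q | IsHeavy μ S f lam Q}) ≤ ENNReal.ofReal (32 * ((∫ x, f x ∂μ) / lam)) := by
  have : Countable {Q | IsHeavy μ S f lam Q} := (hSc.mono fun Q hQ => hQ.1).to_subtype
  rw [sUnion_eq_iUnion, iUnion_eq_iUnion_finset, Directed.measure_iUnion
    (Monotone.directed_le fun s t hst => biUnion_subset_biUnion_left (Finset.coe_subset.2 hst))]
  exact iSup_le fun s => hS.measure_biUnion_le_of_isHeavy hf hfi hlam s _ fun Q _ => Q.2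

end IsSparseFamily

end SparseOperator

open SparseOperator in
/-- A sparse operator satisfies the weak (1,1) inequality
`μ({T^S f > λ}) ≤ (C/λ) ∫ |f| dμ` with an absolute constant `C`. -/
theorem sparse_operator_weak_one_one :
    ∃ C : ℝ, 0 < C ∧
      ∀ (X : Type) (_ : MeasurableSpace X) (μ : Measure X)
        (D : Set (Set X)), D.Countable →
        (∀ Q ∈ D, MeasurableSet Q) →
        (∀ Q ∈ D, 0 < μ Q ∧ μ Q < ⊤) →
        (∀ Q ∈ D, ∀ Q' ∈ D, Q ∩ Q' = ∅ ∨ Q ⊆ Q' ∨ Q' ⊆ Q) →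
        ∀ (S : Set (Set X)), S ⊆ D →
        ∀ (E : Set X → Set X),
          (∀ Q ∈ S, E Q ⊆ Q) →
          (∀ Q ∈ S, MeasurableSet (E Q)) →
          (∀ Q ∈ S, ∀ Q' ∈ S, Q ≠ Q' → E Q ∩ E Q' = ∅) →
          (∀ Q ∈ S, μ Q ≤ 2 * μ (E Q)) →
          ∀ f : X → ℝ, Measurable f → (∀ x, 0 ≤ f x) → Integrable f μ →
            ∀ lam : ℝ, 0 < lam →
              μ {x | lam < ∑' Q : S,
                  (((μ (Q : Set X)).toReal)⁻¹ * ∫ y in (Q : Set X), f y ∂μ) *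
                    (Q : Set X).indicator (fun _ => (1 : ℝ)) x}
                ≤ ENNReal.ofReal ((C / lam) * ∫ x, |f x| ∂μ) := by
  refine ⟨32, by norm_num, ?_⟩
  intro X _ μ D hDc hDmeas hDμ hDnest S hSD E hEsub hEmeas hEdisj hEsp f _ hf hfi lam hlam
  have hS : IsSparseFamily μ S E :=
    { isNested := fun Q hQ Q' hQ' => hDnest Q (hSD hQ) Q' (hSD hQ')
      measurableSet := fun Q hQ => hDmeas Q (hSD hQ)
      measure_pos := fun Q hQ => (hDμ Q (hSD hQ)).1
      measure_lt_top := fun Q hQ => (hDμ Q (hSD hQ)).2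
      subset := hEsub
      measurableSet_sparse := hEmeas
      disjoint_sparse := hEdisj
      measure_le_two_mul := hEsp }
  have hlevel : {x | lam < ∑' Q : S,
      (((μ (Q : Set X)).toReal)⁻¹ * ∫ y in (Q : Set X), f y ∂μ) *
        (Q : Set X).indicator (fun _ => (1 : ℝ)) x} = {x | lam < sparseOperator μ S f x} := by
    simp only [sparseOperator, setAverage_eq, smul_eq_mul, measureReal_def]
  rw [hlevel, integral_congr_ae (Eventually.of_forall fun x => abs_of_nonneg (hf x)),
    div_mul_eq_mul_div, mul_div_assoc]
  calc μ {x | lam < sparseOperator μ S f x} ≤ μ (⋃₀ {Q | IsHeavy μ S f lam Q}) :=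
        measure_mono (hS.isNested.setOf_lt_sparseOperator_subset hlam)
    _ ≤ _ := hS.measure_sUnion_le_of_isHeavy (hDc.mono hSD) hf hfi hlam
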